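/- arXiv:2510.04954 — 2 statements merged into one kernel-verified Lean document; each statement's English description precedes it below -/
import Mathlib

section
/- Under the covariance evolution Γ(t) = I₂ ⊗ [(I/2 − K)e^{-2Xt} + K] with K = (1/2)coth(βh/2) and X = 2q(h)² sinh(βh/2) (h real symmetric positive definite, ε_min its smallest eigenvalue), the trace-norm distance to the fixed point satisfies ‖Γ(t) − I₂ ⊗ K‖_Tr ≤ n (coth(βε_min/2) − 1) e^{-4 min_i q(εᵢ)² sinh(βεᵢ/2) t}, where εᵢ are the eigenvalues of h. -/
open Matrix Real
open scoped Kronecker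

/-- Functional calculus for a real symmetric matrix, via its spectral decomposition. -/
noncomputable def matFun {n : ℕ} {h : Matrix (Fin n) (Fin n) ℝ} (hh : h.IsHermitian)
    (φ : ℝ → ℝ) : Matrix (Fin n) (Fin n) ℝ :=
  (hh.eigenvectorUnitary : Matrix (Fin n) (Fin n) ℝ) *
    Matrix.diagonal (fun i => φ (hh.eigenvalues i)) *
      (star (hh.eigenvectorUnitary : Matrix (Fin n) (Fin n) ℝ))

/-- The trace norm `‖A‖_Tr = Tr √(Aᴴ A)` of a real matrix. -/
noncomputable def traceNormR {ι : Type*} [Fintype ι] [DecidableEq ι]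
    (A : Matrix ι ι ℝ) : ℝ :=
  (((Matrix.posSemidef_conjTranspose_mul_self A).1.eigenvectorUnitary : Matrix ι ι ℝ) *
    Matrix.diagonal ((RCLike.ofReal : ℝ → ℝ) ∘ (√·) ∘
      (Matrix.posSemidef_conjTranspose_mul_self A).1.eigenvalues) *
    (star (Matrix.posSemidef_conjTranspose_mul_self A).1.eigenvectorUnitary : Matrix ι ι ℝ)).trace

section aux
variable {n : ℕ} {h : Matrix (Fin n) (Fin n) ℝ} (hh : h.IsHermitian)

lemma star_mul_self_eigen :
    (star (hh.eigenvectorUnitary : Matrix (Fin n) (Fin n) ℝ)) *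
      (hh.eigenvectorUnitary : Matrix (Fin n) (Fin n) ℝ) = 1 :=
  hh.eigenvectorUnitary.2.1

lemma mul_star_self_eigen :
    (hh.eigenvectorUnitary : Matrix (Fin n) (Fin n) ℝ) *
      (star (hh.eigenvectorUnitary : Matrix (Fin n) (Fin n) ℝ)) = 1 :=
  hh.eigenvectorUnitary.2.2

lemma matFun_mul (φ ψ : ℝ → ℝ) :
    matFun hh φ * matFun hh ψ = matFun hh (fun x => φ x * ψ x) := by
  unfold matFun
  simp only [Matrix.mul_assoc]
  rw [← Matrix.mul_assoc (star _) ((hh.eigenvectorUnitary : Matrix (Fin n) (Fin n) ℝ)),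
    star_mul_self_eigen hh, Matrix.one_mul,
    ← Matrix.mul_assoc (Matrix.diagonal _) (Matrix.diagonal _), Matrix.diagonal_mul_diagonal]

lemma matFun_sub (φ ψ : ℝ → ℝ) :
    matFun hh φ - matFun hh ψ = matFun hh (fun x => φ x - ψ x) := by
  unfold matFun
  rw [← Matrix.sub_mul, ← Matrix.mul_sub, Matrix.diagonal_sub]

lemma matFun_const (c : ℝ) : matFun hh (fun _ => c) = c • (1 : Matrix (Fin n) (Fin n) ℝ) := by
  unfold matFun
  have : Matrix.diagonal (fun _ : Fin n => c) = c • (1 : Matrix (Fin n) (Fin n) ℝ) := by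
    rw [Matrix.smul_one_eq_diagonal]
  rw [this, Matrix.mul_smul, Matrix.smul_mul, Matrix.mul_one, mul_star_self_eigen hh]

lemma matFun_conjTranspose (φ : ℝ → ℝ) : (matFun hh φ)ᴴ = matFun hh φ := by
  unfold matFun
  simp only [Matrix.conjTranspose_mul, Matrix.conjTranspose_conjTranspose,
    Matrix.diagonal_conjTranspose, Matrix.star_eq_conjTranspose, Matrix.mul_assoc,
    star_trivial]

lemma matFun_trace (φ : ℝ → ℝ) :
    (matFun hh φ).trace = ∑ i, φ (hh.eigenvalues i) := by
  unfold matFun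
  rw [Matrix.trace_mul_cycle, star_mul_self_eigen hh, Matrix.one_mul, Matrix.trace_diagonal]

lemma kron_sub {l m : Type*} [Fintype l] [Fintype m] (A : Matrix l l ℝ) (B C : Matrix m m ℝ) :
    A ⊗ₖ B - A ⊗ₖ C = A ⊗ₖ (B - C) := by
  ext ⟨i, k⟩ ⟨j, l'⟩
  simp [Matrix.kroneckerMap_apply, mul_sub]

lemma kron_conjTranspose {l m : Type*} [Fintype l] [Fintype m]
    (A : Matrix l l ℝ) (B : Matrix m m ℝ) : (A ⊗ₖ B)ᴴ = Aᴴ ⊗ₖ Bᴴ := by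
  ext ⟨i, k⟩ ⟨j, l'⟩
  simp [Matrix.kroneckerMap_apply, Matrix.conjTranspose_apply]

end aux

open scoped MatrixOrder in
lemma traceNormR_eq_of_sq {ι : Type*} [Fintype ι] [DecidableEq ι]
    (A S : Matrix ι ι ℝ) (hS : S.PosSemidef) (hSsq : S ^ 2 = Aᴴ * A) :
    traceNormR A = S.trace := by
  have hP := Matrix.posSemidef_conjTranspose_mul_self A
  have h1 : CFC.sqrt (Aᴴ * A) = ((hP.1.eigenvectorUnitary : Matrix ι ι ℝ) *
      Matrix.diagonal ((RCLike.ofReal : ℝ → ℝ) ∘ (√·) ∘ hP.1.eigenvalues) *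
      (star hP.1.eigenvectorUnitary : Matrix ι ι ℝ)) := by
    rw [CFC.sqrt_eq_real_sqrt _ hP.nonneg, cfcₙ_eq_cfc, hP.1.cfc_eq]
    rfl
  unfold traceNormR
  rw [← h1, ← hSsq, CFC.sqrt_sq S hS.nonneg]

/-- for the covariance evolution
`Γ(t) = I₂ ⊗ [(I/2 − K)e^{-2Xt} + K]` with `K = (1/2)coth(βh/2)` and
`X = 2q(h)² sinh(βh/2)` (`h` real symmetric positive definite with eigenvalues `εᵢ` and
least eigenvalue `ε_min`), the trace-norm distance to the fixed point satisfies
`‖Γ(t) − I₂ ⊗ K‖_Tr ≤ n (coth(βε_min/2) − 1) e^{-4 minᵢ q(εᵢ)² sinh(βεᵢ/2) t}`. -/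
theorem stmt13 {n : ℕ} (hn : 0 < n) (β : ℝ) (hβ : 0 < β) (q : ℝ → ℝ)
    (hqpos : ∀ x, 0 < q x)
    (h : Matrix (Fin n) (Fin n) ℝ) (hsymm : h.IsHermitian) (hpd : h.PosDef)
    (K : Matrix (Fin n) (Fin n) ℝ)
    (hK : K = matFun hsymm (fun x => Real.cosh (β * x / 2) / (2 * Real.sinh (β * x / 2))))
    (Γ : ℝ → Matrix (Fin 2 × Fin n) (Fin 2 × Fin n) ℝ)
    (hΓ : ∀ t, Γ t = (1 : Matrix (Fin 2) (Fin 2) ℝ) ⊗ₖ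
      (((1 / 2 : ℝ) • (1 : Matrix (Fin n) (Fin n) ℝ) - K) *
        matFun hsymm (fun x => Real.exp (-4 * q x ^ 2 * Real.sinh (β * x / 2) * t)) + K))
    (εmin : ℝ)
    (hεmin : εmin = Finset.univ.inf'
      (⟨⟨0, hn⟩, Finset.mem_univ _⟩ : (Finset.univ : Finset (Fin n)).Nonempty) hsymm.eigenvalues)
    (t : ℝ) (ht : 0 ≤ t) :
    traceNormR (Γ t - (1 : Matrix (Fin 2) (Fin 2) ℝ) ⊗ₖ K)
      ≤ n * (Real.cosh (β * εmin / 2) / Real.sinh (β * εmin / 2) - 1) *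
        Real.exp (-4 * (Finset.univ.inf'
          (⟨⟨0, hn⟩, Finset.mem_univ _⟩ : (Finset.univ : Finset (Fin n)).Nonempty)
          (fun i => q (hsymm.eigenvalues i) ^ 2 * Real.sinh (β * hsymm.eigenvalues i / 2))) * t) := by
  classical
  set ne : (Finset.univ : Finset (Fin n)).Nonempty :=
    ⟨⟨0, hn⟩, Finset.mem_univ _⟩ with hne
  set ε := hsymm.eigenvalues with hε
  -- basic scalar functions
  set f : ℝ → ℝ := fun x => Real.cosh (β * x / 2) / (2 * Real.sinh (β * x / 2)) with hf
  set g : ℝ → ℝ := fun x => Real.exp (-4 * q x ^ 2 * Real.sinh (β * x / 2) * t) with hg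
  set χ : ℝ → ℝ := fun x => (1 / 2 - f x) * g x with hχ
  -- the difference matrix
  have hsub : Γ t - (1 : Matrix (Fin 2) (Fin 2) ℝ) ⊗ₖ K
      = (1 : Matrix (Fin 2) (Fin 2) ℝ) ⊗ₖ matFun hsymm χ := by
    rw [hΓ t, kron_sub, add_sub_cancel_right, hK, ← matFun_const hsymm (1/2 : ℝ),
      matFun_sub, matFun_mul]
  -- trace norm computation
  have hχabs : ∀ x, |χ x| * |χ x| = χ x * χ x := fun x => abs_mul_abs_self _
  set S : Matrix (Fin 2 × Fin n) (Fin 2 × Fin n) ℝ :=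
    (1 : Matrix (Fin 2) (Fin 2) ℝ) ⊗ₖ matFun hsymm (fun x => |χ x|) with hS
  have hSsq : S ^ 2 = (Γ t - (1 : Matrix (Fin 2) (Fin 2) ℝ) ⊗ₖ K)ᴴ *
      (Γ t - (1 : Matrix (Fin 2) (Fin 2) ℝ) ⊗ₖ K) := by
    rw [hsub, hS, pow_two, ← Matrix.mul_kronecker_mul, Matrix.one_mul, matFun_mul,
      kron_conjTranspose, matFun_conjTranspose, Matrix.conjTranspose_one,
      ← Matrix.mul_kronecker_mul, Matrix.one_mul, matFun_mul]
    have heq : (fun x => |χ x| * |χ x|) = fun x => χ x * χ x := funext hχabs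
    rw [heq]
  have hSpsd : S.PosSemidef := by
    have hB : S = (((1 : Matrix (Fin 2) (Fin 2) ℝ) ⊗ₖ
        matFun hsymm (fun x => Real.sqrt |χ x|)))ᴴ *
        ((1 : Matrix (Fin 2) (Fin 2) ℝ) ⊗ₖ matFun hsymm (fun x => Real.sqrt |χ x|)) := by
      rw [kron_conjTranspose, matFun_conjTranspose, Matrix.conjTranspose_one,
        ← Matrix.mul_kronecker_mul, Matrix.one_mul, matFun_mul, hS]
      have heq : (fun x => Real.sqrt |χ x| * Real.sqrt |χ x|) = fun x => |χ x| :=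
        funext fun x => Real.mul_self_sqrt (abs_nonneg _)
      rw [heq]
    rw [hB]
    exact Matrix.posSemidef_conjTranspose_mul_self _
  have htrace : traceNormR (Γ t - (1 : Matrix (Fin 2) (Fin 2) ℝ) ⊗ₖ K)
      = 2 * ∑ i, |χ (ε i)| := by
    rw [traceNormR_eq_of_sq _ S hSpsd hSsq]
    rw [hS, Matrix.trace_kronecker, Matrix.trace_one, matFun_trace]
    simp
    rfl
  rw [htrace]
  -- scalar bounds
  set m : ℝ := Finset.univ.inf' ne (fun i => q (ε i) ^ 2 * Real.sinh (β * ε i / 2)) with hm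
  have hεpos : ∀ i, 0 < ε i := fun i => hpd.eigenvalues_pos i
  obtain ⟨i0, _, hi0⟩ := Finset.exists_mem_eq_inf' ne ε
  have hεminpos : 0 < εmin := by rw [hεmin, hi0]; exact hεpos i0
  have hεminle : ∀ i, εmin ≤ ε i := fun i => by
    rw [hεmin]; exact Finset.inf'_le _ (Finset.mem_univ i)
  have hsinhmin : 0 < Real.sinh (β * εmin / 2) := by
    rw [Real.sinh_pos_iff]; exact div_pos (mul_pos hβ hεminpos) two_pos
  set A : ℝ := Real.cosh (β * εmin / 2) / (2 * Real.sinh (β * εmin / 2)) - 1 / 2 with hA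
  set B : ℝ := Real.exp (-4 * m * t) with hB
  have hAnn : 0 ≤ A := by
    rw [hA]
    have h1 : Real.sinh (β * εmin / 2) ≤ Real.cosh (β * εmin / 2) := by
      nlinarith [Real.cosh_sub_sinh (β * εmin / 2), Real.exp_pos (-(β * εmin / 2))]
    rw [sub_nonneg, div_le_div_iff₀ (by norm_num) (by linarith)]
    linarith
  have key : ∀ i, |χ (ε i)| ≤ A * B := by
    intro i
    have hsi : 0 < Real.sinh (β * ε i / 2) := by
      rw [Real.sinh_pos_iff]; exact div_pos (mul_pos hβ (hεpos i)) two_pos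
    have hci : Real.sinh (β * ε i / 2) ≤ Real.cosh (β * ε i / 2) := by
      nlinarith [Real.cosh_sub_sinh (β * ε i / 2), Real.exp_pos (-(β * ε i / 2))]
    have hf2 : (1 : ℝ) / 2 ≤ f (ε i) := by
      rw [hf]
      rw [div_le_div_iff₀ (by norm_num) (by linarith)]
      linarith
    have hgpos : 0 < g (ε i) := Real.exp_pos _
    have habs : |χ (ε i)| = (f (ε i) - 1 / 2) * g (ε i) := by
      rw [hχ]
      rw [abs_mul, abs_of_nonpos (by linarith), abs_of_pos hgpos]
      ring
    rw [habs]
    -- f (ε i) - 1/2 ≤ A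
    have hfA : f (ε i) - 1 / 2 ≤ A := by
      rw [hf, hA]
      have hmono : Real.cosh (β * ε i / 2) / (2 * Real.sinh (β * ε i / 2)) ≤
          Real.cosh (β * εmin / 2) / (2 * Real.sinh (β * εmin / 2)) := by
        rw [div_le_div_iff₀ (by linarith) (by linarith)]
        have hdiff : 0 ≤ Real.sinh (β * ε i / 2 - β * εmin / 2) := by
          apply Real.sinh_nonneg_iff.2
          have := hεminle i
          nlinarith
        rw [Real.sinh_sub] at hdiff
        nlinarith [Real.cosh_pos (β * ε i / 2), Real.cosh_pos (β * εmin / 2)]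
      linarith
    have hgB : g (ε i) ≤ B := by
      rw [hg, hB]
      apply Real.exp_le_exp.2
      have hmle : m ≤ q (ε i) ^ 2 * Real.sinh (β * ε i / 2) := by
        rw [hm]; exact Finset.inf'_le _ (Finset.mem_univ i)
      nlinarith
    exact mul_le_mul hfA hgB (le_of_lt hgpos) hAnn
  have hsum : ∑ i, |χ (ε i)| ≤ n * (A * B) := by
    calc ∑ i, |χ (ε i)| ≤ ∑ _i : Fin n, A * B := Finset.sum_le_sum (fun i _ => key i)
    _ = n * (A * B) := by rw [Finset.sum_const, Finset.card_univ, Fintype.card_fin,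
        nsmul_eq_mul]
  have hA2 : 2 * A = Real.cosh (β * εmin / 2) / Real.sinh (β * εmin / 2) - 1 := by
    rw [hA, mul_comm (2 : ℝ) (Real.sinh (β * εmin / 2)), ← div_div]
    ring
  calc 2 * ∑ i, |χ (ε i)| ≤ 2 * (n * (A * B)) := by linarith
  _ = n * (2 * A) * B := by ring
  _ = n * (Real.cosh (β * εmin / 2) / Real.sinh (β * εmin / 2) - 1) * B := by rw [hA2]
end

section
/- For a free-fermion Lindbladian in diagonal form L₀ = Σᵢ (f̂(−εᵢ)² D[bᵢ] + f̂(εᵢ)² D[bᵢ†]) acting in the Heisenberg picture, where D[L](O) = L†OL − ½{L†L, O}, the fermionic quasi-derivations of the projected components satisfy δᵢᶠ(Pᵢ(Lᵢ[O])) = −2q(εᵢ)² cosh(βεᵢ/2) δᵢᶠ(Pᵢ(O)) and δᵢᶠ(Qᵢ(Lᵢ[O])) = −q(εᵢ)² cosh(βεᵢ/2) δᵢᶠ(Qᵢ(O)), where f̂(ν) = q(ν)e^{-βν/4} with q even and positive. -/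
open Matrix

namespace Stmt16

/-- The fermionic annihilation operator of a single mode. -/
def b : Matrix (Fin 2) (Fin 2) ℂ := !![0, 1; 0, 0]

/-- The fermionic creation operator `b† = bᴴ` of a single mode. -/
def bd : Matrix (Fin 2) (Fin 2) ℂ := bᴴ

/-- The fermionic partial trace, via its sum–product formula. -/
noncomputable def Trf (O : Matrix (Fin 2) (Fin 2) ℂ) : Matrix (Fin 2) (Fin 2) ℂ :=
  (1 / 2 : ℂ) • (O + (b + bd) * O * (b + bd) + (b - bd) * O * (bd - b)
    + (1 - 2 • (bd * b)) * O * (1 - 2 • (bd * b)))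

/-- The fermionic quasi-derivation `δᶠ(O) = O − (I/2) Trᶠ(O)`. -/
noncomputable def δf (O : Matrix (Fin 2) (Fin 2) ℂ) : Matrix (Fin 2) (Fin 2) ℂ :=
  O - (1 / 2 : ℂ) • Trf O

/-- Projection onto the diagonal space of the mode. -/
noncomputable def Pproj (O : Matrix (Fin 2) (Fin 2) ℂ) : Matrix (Fin 2) (Fin 2) ℂ :=
  b * bd * O * (b * bd) + bd * b * O * (bd * b)

/-- Projection onto the off-diagonal space of the mode. -/
noncomputable def Qproj (O : Matrix (Fin 2) (Fin 2) ℂ) : Matrix (Fin 2) (Fin 2) ℂ :=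
  b * bd * O * (bd * b) + bd * b * O * (b * bd)

/-- The single-mode free-fermion Lindbladian in Heisenberg picture,
`L = f̂(−ε)² D[b] + f̂(ε)² D[b†]` with `D[L](O) = L†OL − ½{L†L, O}` and
`f̂(ν) = q(ν) e^{-βν/4}`, so `f̂(−ε)² = q(ε)² e^{βε/2}` and `f̂(ε)² = q(ε)² e^{-βε/2}`
for even `q`. -/
noncomputable def Lop (β ε qε : ℝ) (O : Matrix (Fin 2) (Fin 2) ℂ) :
    Matrix (Fin 2) (Fin 2) ℂ :=
  ((qε ^ 2 * Real.exp (β * ε / 2) : ℝ) : ℂ) •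
      (bd * O * b - (1 / 2 : ℂ) • (bd * b * O + O * (bd * b)))
    + ((qε ^ 2 * Real.exp (-(β * ε) / 2) : ℝ) : ℂ) •
      (b * O * bd - (1 / 2 : ℂ) • (b * bd * O + O * (b * bd)))


lemma bd_eq : bd = !![0, 0; 1, 0] := by
  ext i j
  fin_cases i <;> fin_cases j <;> simp [bd, b, conjTranspose_apply]

lemma Pproj_eq (O : Matrix (Fin 2) (Fin 2) ℂ) :
    Pproj O = !![O 0 0, 0; 0, O 1 1] := by
  ext i j
  fin_cases i <;> fin_cases j <;>
    (simp only [Pproj, bd_eq, b, Matrix.mul_apply, Fin.sum_univ_two, Matrix.add_apply]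
     simp )

lemma Qproj_eq (O : Matrix (Fin 2) (Fin 2) ℂ) :
    Qproj O = !![0, O 0 1; O 1 0, 0] := by
  ext i j
  fin_cases i <;> fin_cases j <;>
    (simp only [Qproj, bd_eq, b, Matrix.mul_apply, Fin.sum_univ_two, Matrix.add_apply]
     simp )

lemma δf_eq (O : Matrix (Fin 2) (Fin 2) ℂ) :
    δf O = !![(O 0 0 - O 1 1) / 2, O 0 1; O 1 0, (O 1 1 - O 0 0) / 2] := by
  ext i j
  fin_cases i <;> fin_cases j <;>
    (simp only [δf, Trf, bd_eq, b, two_smul, Matrix.mul_apply, Fin.sum_univ_two,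
      Matrix.add_apply, Matrix.sub_apply, Matrix.smul_apply, Matrix.one_apply, smul_eq_mul]
     simp <;> ring)

lemma Lop_eq (β ε qε : ℝ) (O : Matrix (Fin 2) (Fin 2) ℂ) :
    Lop β ε qε O =
      !![((qε ^ 2 * Real.exp (-(β * ε) / 2) : ℝ) : ℂ) * (O 1 1 - O 0 0),
          -(((qε ^ 2 * Real.exp (β * ε / 2) : ℝ) : ℂ)
            + ((qε ^ 2 * Real.exp (-(β * ε) / 2) : ℝ) : ℂ)) / 2 * O 0 1;
         -(((qε ^ 2 * Real.exp (β * ε / 2) : ℝ) : ℂ)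
            + ((qε ^ 2 * Real.exp (-(β * ε) / 2) : ℝ) : ℂ)) / 2 * O 1 0,
          ((qε ^ 2 * Real.exp (β * ε / 2) : ℝ) : ℂ) * (O 0 0 - O 1 1)] := by
  ext i j
  fin_cases i <;> fin_cases j <;>
    (simp only [Lop, bd_eq, b, Matrix.mul_apply, Fin.sum_univ_two, Matrix.add_apply,
      Matrix.sub_apply, Matrix.smul_apply, smul_eq_mul]
     simp <;> ring_nf <;> simp)

/-- for the free-fermion mode Lindbladian,
`δᶠ(P(L[O])) = −2q(ε)² cosh(βε/2) δᶠ(P(O))` and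
`δᶠ(Q(L[O])) = −q(ε)² cosh(βε/2) δᶠ(Q(O))`. -/
theorem stmt16 (β ε : ℝ) (q : ℝ → ℝ)
    (hqeven : ∀ x, q (-x) = q x) (hqpos : ∀ x, 0 < q x)
    (O : Matrix (Fin 2) (Fin 2) ℂ) :
    δf (Pproj (Lop β ε (q ε) O))
        = ((-(2 * q ε ^ 2 * Real.cosh (β * ε / 2)) : ℝ) : ℂ) • δf (Pproj O) ∧
    δf (Qproj (Lop β ε (q ε) O))
        = ((-(q ε ^ 2 * Real.cosh (β * ε / 2)) : ℝ) : ℂ) • δf (Qproj O) := by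
  have hcosh : ((Real.cosh (β * ε / 2) : ℝ) : ℂ)
      = (((Real.exp (β * ε / 2) : ℝ) : ℂ) + ((Real.exp (-(β * ε) / 2) : ℝ) : ℂ)) / 2 := by
    rw [Real.cosh_eq]; push_cast; ring_nf
  constructor <;>
  · rw [Lop_eq]
    ext i j
    fin_cases i <;> fin_cases j <;>
      (simp [Pproj_eq, Qproj_eq, δf_eq, Matrix.smul_apply, hcosh]
       try (push_cast; ring))

end Stmt16
end
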